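/- A permutation w of {1,…,n} is boolean (i.e., every reduced word for w has pairwise distinct letters) if and only if w avoids the patterns 321 and 3412. -/

import Mathlib

/-- The adjacent transposition swapping (0-indexed) positions `k` and `k+1` in `Fin n`;
the identity if `k+1 ≥ n`. -/
def adjTransposition (n : ℕ) (k : ℕ) : Equiv.Perm (Fin n) :=
  if h : k + 1 < n then Equiv.swap ⟨k, Nat.lt_of_succ_lt h⟩ ⟨k + 1, h⟩ else 1

/-- `l` is a word for the permutation `w` of `Fin n`. -/
def IsWord (n : ℕ) (w : Equiv.Perm (Fin n)) (l : List ℕ) : Prop :=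
  (∀ k ∈ l, k + 1 < n) ∧ w = (l.map (adjTransposition n)).prod

/-- `l` is a reduced word for `w`. -/
def IsReducedWord (n : ℕ) (w : Equiv.Perm (Fin n)) (l : List ℕ) : Prop :=
  IsWord n w l ∧ ∀ l', IsWord n w l' → l.length ≤ l'.length

/-- `w` is `k`-boolean: every letter appears at most `k` times in every reduced word. -/
def IsKBoolean (k n : ℕ) (w : Equiv.Perm (Fin n)) : Prop :=
  ∀ l, IsReducedWord n w l → ∀ i, l.count i ≤ k

/-- `w` contains the pattern whose one-line notation is the list `p`. -/
def ContainsPattern {n : ℕ} (w : Equiv.Perm (Fin n)) (p : List ℕ) : Prop :=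
  ∃ f : Fin p.length → Fin n, StrictMono f ∧
    ∀ a b : Fin p.length, w (f a) < w (f b) ↔ p.get a < p.get b

/-- `f n` is the number of 2-boolean permutations of `Fin n`. -/
noncomputable def numTwoBoolean (n : ℕ) : ℕ :=
  Nat.card {w : Equiv.Perm (Fin n) // IsKBoolean 2 n w}

/-- `w(1) ≠ 1` in 1-indexed notation. -/
def MovesZero : {n : ℕ} → Equiv.Perm (Fin n) → Prop
  | 0, _ => False
  | _ + 1, w => w 0 ≠ 0

/-- the statistic `a(w)`. -/
noncomputable def aStat : {n : ℕ} → Equiv.Perm (Fin n) → ℕ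
  | 0, _ => 0
  | _ + 1, w => Nat.card {i // 0 < i ∧ i < w⁻¹ 0 ∧ w 0 < w i}

/-- the statistic `b(w)`. -/
noncomputable def bStat : {n : ℕ} → Equiv.Perm (Fin n) → ℕ
  | 0, _ => 0
  | _ + 1, w => Nat.card {i // w⁻¹ 0 < i ∧ 0 < w i ∧ w i < w 0}

/-- the statistic `c(w)`. -/
noncomputable def cStat : {n : ℕ} → Equiv.Perm (Fin n) → ℕ
  | 0, _ => 0
  | _ + 1, w => Nat.card {i // 0 < i ∧ i < w⁻¹ 0 ∧ 0 < w i ∧ w i < w 0}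

/-- number of inversions (Coxeter length). -/
noncomputable def invCount {n : ℕ} (w : Equiv.Perm (Fin n)) : ℕ :=
  Nat.card {p : Fin n × Fin n // p.1 < p.2 ∧ w p.2 < w p.1}

noncomputable def fA (n a : ℕ) : ℕ :=
  Nat.card {w : Equiv.Perm (Fin n) // IsKBoolean 2 n w ∧ MovesZero w ∧ aStat w = a}

noncomputable def fAB (n a b : ℕ) : ℕ :=
  Nat.card {w : Equiv.Perm (Fin n) //
    IsKBoolean 2 n w ∧ MovesZero w ∧ aStat w = a ∧ bStat w = b}

/-!
Write `crossings w i` for the positions `j ≤ i` with `w j > i`. A letter `i` moves at most one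
such position across the gap between `i` and `i + 1`, so every word for `w` uses the letter `i`
at least `#(crossings w i)` times. If `w` avoids `321`, these bounds add up to
`∑ j, (w j - j) ≥ #(inversions w)`, which is at least the length of a reduced word, so a reduced
word uses every letter exactly `#(crossings w i)` times; avoiding `3412` as well makes each of
these numbers at most one. Conversely, multiplying a permutation that stabilizes `{0, …, k}` on
the left by `s_k` cannot create an occurrence of `321` or `3412`, so the product of a word with
distinct letters avoids both patterns.
-/

open Finset Equiv

variable {n : ℕ}

section AdjTransposition

variable {k : ℕ}

lemma adjTransposition_eq_swap (hk : k + 1 < n) :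
    adjTransposition n k = swap ⟨k, Nat.lt_of_succ_lt hk⟩ ⟨k + 1, hk⟩ := by
  simp [adjTransposition, hk]

lemma val_adjTransposition_apply (hk : k + 1 < n) (x : Fin n) :
    (adjTransposition n k x : ℕ) =
      if (x : ℕ) = k then k + 1 else if (x : ℕ) = k + 1 then k else x := by
  rw [adjTransposition_eq_swap hk, swap_apply_def]
  split_ifs <;> simp_all [Fin.ext_iff]

lemma adjTransposition_mul_self : adjTransposition n k * adjTransposition n k = 1 := by
  unfold adjTransposition
  split_ifs <;> simp

lemma adjTransposition_lt_adjTransposition_iff (hk : k + 1 < n) {a b : Fin n}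
    (h₁ : ¬((a : ℕ) = k ∧ (b : ℕ) = k + 1)) (h₂ : ¬((a : ℕ) = k + 1 ∧ (b : ℕ) = k)) :
    adjTransposition n k a < adjTransposition n k b ↔ a < b := by
  have ha := val_adjTransposition_apply hk a
  have hb := val_adjTransposition_apply hk b
  rw [Fin.lt_def, Fin.lt_def]
  split_ifs at ha hb <;> omega

end AdjTransposition

section Inversions

def inversions (w : Perm (Fin n)) : Finset (Fin n × Fin n) :=
  {p | p.1 < p.2 ∧ w p.2 < w p.1}

lemma exists_descent_of_ne_one {w : Perm (Fin n)} (hw : w ≠ 1) :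
    ∃ k, ∃ hk : k + 1 < n, w ⟨k + 1, hk⟩ < w ⟨k, Nat.lt_of_succ_lt hk⟩ := by
  by_contra! hasc
  apply hw
  cases n with
  | zero => exact Subsingleton.elim _ _
  | succ m =>
    have hmono : StrictMono w := Fin.strictMono_iff_lt_succ.2 fun i =>
      (hasc i (by simp)).lt_of_ne (w.injective.ne (by simp [Fin.ext_iff]))
    ext x
    simp [hmono.apply_eq]

lemma card_inversions_mul_adjTransposition_lt {w : Perm (Fin n)} {k : ℕ} (hk : k + 1 < n)
    (hdesc : w ⟨k + 1, hk⟩ < w ⟨k, Nat.lt_of_succ_lt hk⟩) :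
    #(inversions (w * adjTransposition n k)) < #(inversions w) := by
  have hs := (adjTransposition n k).injective
  have hval := val_adjTransposition_apply hk
  rw [← card_map ⟨_, hs.prodMap hs⟩]
  refine card_lt_card ((ssubset_iff_of_subset ?_).2 ?_)
  · simp only [subset_iff, inversions, mem_map, mem_filter, mem_univ, true_and]
    rintro _ ⟨⟨a, b⟩, ⟨hab, hw⟩, rfl⟩
    dsimp only at hab hw ⊢
    refine ⟨(adjTransposition_lt_adjTransposition_iff hk ?_ ?_).2 hab, hw⟩
    · rintro ⟨ha, hb⟩
      obtain rfl : a = ⟨k, Nat.lt_of_succ_lt hk⟩ := Fin.ext ha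
      obtain rfl : b = ⟨k + 1, hk⟩ := Fin.ext hb
      simp only [adjTransposition_eq_swap hk, Perm.mul_apply, swap_apply_left,
        swap_apply_right] at hw
      exact hw.not_gt hdesc
    · rw [Fin.lt_def] at hab
      omega
  · refine ⟨(⟨k, Nat.lt_of_succ_lt hk⟩, ⟨k + 1, hk⟩), ?_, ?_⟩
    · simp [inversions, hdesc]
    · simp only [inversions, mem_map, mem_filter, mem_univ, true_and, not_exists, not_and]
      rintro ⟨a, b⟩ ⟨hab, -⟩ heq
      dsimp only at hab
      simp only [Function.Embedding.coeFn_mk, Prod.map_apply, Prod.mk.injEq, Fin.ext_iff] at heq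
      have ha := hval a
      have hb := hval b
      rw [Fin.lt_def] at hab
      split_ifs at ha hb <;> omega

end Inversions

section ReducedWords

lemma IsWord.mul_adjTransposition {w : Perm (Fin n)} {l : List ℕ} (hl : IsWord n w l) {k : ℕ}
    (hk : k + 1 < n) : IsWord n (w * adjTransposition n k) (l ++ [k]) := by
  refine ⟨fun m hm => ?_, by simp [hl.2]⟩
  rcases List.mem_append.1 hm with hm | hm
  · exact hl.1 m hm
  · rwa [List.mem_singleton.1 hm]

lemma exists_isWord_length_le (w : Perm (Fin n)) :
    ∃ l, IsWord n w l ∧ l.length ≤ #(inversions w) := by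
  induction h : #(inversions w) using Nat.strong_induction_on generalizing w with
  | _ N ih =>
    by_cases hw : w = 1
    · exact ⟨[], ⟨by simp, by simp [hw]⟩, by simp⟩
    obtain ⟨k, hk, hdesc⟩ := exists_descent_of_ne_one hw
    have hlt := card_inversions_mul_adjTransposition_lt hk hdesc
    obtain ⟨l, hl, hlen⟩ := ih _ (h ▸ hlt) (w * adjTransposition n k) rfl
    refine ⟨l ++ [k], ?_, ?_⟩
    · simpa [mul_assoc, adjTransposition_mul_self] using hl.mul_adjTransposition hk
    · simp only [List.length_append, List.length_singleton]
      omega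

lemma exists_isReducedWord (w : Perm (Fin n)) : ∃ l, IsReducedWord n w l := by
  classical
  have h : ∃ m, ∃ l, IsWord n w l ∧ l.length = m :=
    let ⟨l, hl, _⟩ := exists_isWord_length_le w
    ⟨_, l, hl, rfl⟩
  obtain ⟨l, hl, hlen⟩ := Nat.find_spec h
  exact ⟨l, hl, fun l' hl' => hlen ▸ Nat.find_min' h ⟨l', hl', rfl⟩⟩

end ReducedWords

section Patterns

variable {w : Perm (Fin n)}

lemma containsPattern_321 {a b c : Fin n} (hab : a < b) (hbc : b < c)
    (hwab : w b < w a) (hwbc : w c < w b) : ContainsPattern w [3, 2, 1] := by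
  refine ⟨![a, b, c], Fin.strictMono_iff_lt_succ.2 fun i => ?_, fun i j => ?_⟩
  · fin_cases i <;> simpa
  · fin_cases i <;> fin_cases j <;> simp <;> order

lemma containsPattern_3412 {a b c d : Fin n} (hab : a < b) (hbc : b < c) (hcd : c < d)
    (hwab : w a < w b) (hwda : w d < w a) (hwcd : w c < w d) :
    ContainsPattern w [3, 4, 1, 2] := by
  refine ⟨![a, b, c, d], Fin.strictMono_iff_lt_succ.2 fun i => ?_, fun i j => ?_⟩
  · fin_cases i <;> simpa
  · fin_cases i <;> fin_cases j <;> simp <;> order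

end Patterns

section Crossings

def crossings (w : Perm (Fin n)) (i : ℕ) : Finset (Fin n) :=
  {j | (j : ℕ) ≤ i ∧ i < w j}

lemma crossings_adjTransposition_mul_of_ne {i k : ℕ} (hk : k + 1 < n) (hik : i ≠ k)
    (v : Perm (Fin n)) : crossings (adjTransposition n k * v) i = crossings v i := by
  ext j
  have hval := val_adjTransposition_apply hk (v j)
  simp only [crossings, mem_filter, mem_univ, true_and]
  rw [Perm.mul_apply]
  split_ifs at hval <;> omega

lemma crossings_adjTransposition_mul_subset {k : ℕ} (hk : k + 1 < n) (v : Perm (Fin n)) :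
    crossings (adjTransposition n k * v) k ⊆
      insert (v⁻¹ ⟨k, Nat.lt_of_succ_lt hk⟩) (crossings v k) := by
  intro j
  have hval := val_adjTransposition_apply hk (v j)
  simp only [crossings, mem_insert, mem_filter, mem_univ, true_and]
  simp only [Perm.mul_apply, Perm.eq_inv_iff_eq, Fin.ext_iff]
  split_ifs at hval <;> omega

/-- Each letter `k` changes only the `k`-th crossing set, by at most one position. -/
lemma card_crossings_le_count {w : Perm (Fin n)} {l : List ℕ} (hl : IsWord n w l) (i : ℕ) :
    #(crossings w i) ≤ l.count i := by
  induction l generalizing w with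
  | nil => simp [crossings, hl.2]
  | cons k l ih =>
    obtain ⟨hlet, rfl⟩ := hl
    have hk : k + 1 < n := hlet k List.mem_cons_self
    have hrest := ih (w := (l.map (adjTransposition n)).prod)
      ⟨fun m hm => hlet m (List.mem_cons_of_mem k hm), rfl⟩
    rw [List.map_cons, List.prod_cons, List.count_cons]
    by_cases hik : i = k
    · subst hik
      grw [crossings_adjTransposition_mul_subset hk, card_insert_le, hrest]
      simp
    · rw [crossings_adjTransposition_mul_of_ne hk hik]
      simpa [Ne.symm hik] using hrest

lemma sum_card_crossings (w : Perm (Fin n)) :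
    ∑ i ∈ range n, #(crossings w i) = ∑ j, ((w j : ℕ) - j) := by
  simp only [crossings, card_filter]
  rw [sum_comm]
  refine sum_congr rfl fun j _ => ?_
  rw [← card_filter, ← Nat.card_Ico]
  congr 1
  ext i
  simp only [mem_filter, mem_range, mem_Ico]
  have := (w j).isLt
  omega

end Crossings

section Avoidance

lemma card_filter_apply_lt (w : Perm (Fin n)) (c : Fin n) : #{j | w j < c} = c := by
  rw [← Fin.card_Iio c]
  exact card_equiv w (by simp)

lemma card_inversions_eq_sum_card_filter (w : Perm (Fin n)) :
    #(inversions w) = ∑ a, #{b | a < b ∧ w b < w a} := by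
  simp only [inversions, card_filter, Fintype.sum_prod_type]

variable {w : Perm (Fin n)}

lemma card_filter_lt_and_apply_lt_le_sub (h321 : ¬ ContainsPattern w [3, 2, 1]) (a : Fin n) :
    #{b | a < b ∧ w b < w a} ≤ (w a : ℕ) - a := by
  set X : Finset (Fin n) := {b | a < b ∧ w b < w a}
  obtain hX | ⟨b, hb⟩ := X.eq_empty_or_nonempty
  · simp [hX]
  simp only [X, mem_filter, mem_univ, true_and] at hb
  -- an earlier position with a larger value would complete a 321 with `a` and `b`
  have hbefore : ∀ x < a, w x < w a := fun x hx =>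
    (le_of_not_gt fun h => h321 (containsPattern_321 hx hb.1 h hb.2)).lt_of_ne
      (w.injective.ne hx.ne)
  have hdisj : Disjoint (Iio a) X := disjoint_left.2 fun x hx hxX => by
    simp only [X, mem_filter, mem_univ, true_and, mem_Iio] at hx hxX
    exact hxX.1.not_gt hx
  have hsub : Iio a ∪ X ⊆ ({j | w j < w a} : Finset (Fin n)) := by
    intro x hx
    simp only [X, mem_union, mem_filter, mem_univ, true_and, mem_Iio] at hx ⊢
    exact hx.elim (hbefore x) And.right
  have := card_le_card hsub
  rw [card_union_of_disjoint hdisj, Fin.card_Iio, card_filter_apply_lt] at this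
  omega

lemma card_inversions_le_sum_card_crossings (h321 : ¬ ContainsPattern w [3, 2, 1]) :
    #(inversions w) ≤ ∑ i ∈ range n, #(crossings w i) := by
  rw [card_inversions_eq_sum_card_filter, sum_card_crossings]
  exact sum_le_sum fun a _ => card_filter_lt_and_apply_lt_le_sub h321 a

lemma card_crossings_le_one (h321 : ¬ ContainsPattern w [3, 2, 1])
    (h3412 : ¬ ContainsPattern w [3, 4, 1, 2]) (i : ℕ) : #(crossings w i) ≤ 1 := by
  set S : Finset (Fin n) := {j | (j : ℕ) ≤ i}
  set T : Finset (Fin n) := {j | (w j : ℕ) ≤ i}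
  have hST : #T = #S := card_equiv w (by simp [S, T])
  have hcross : crossings w i = S \ T := by ext; simp [crossings, S, T]
  -- `w` moves as many positions down across `i` as it moves up across it
  have hback : #(T \ S) = #(crossings w i) := hcross ▸ card_sdiff_comm hST
  by_contra! h
  obtain ⟨j₁, hj₁, j₂, hj₂, hj⟩ := (one_lt_card_iff_nontrivial.1 h).exists_lt
  obtain ⟨k₁, hk₁, k₂, hk₂, hk⟩ := (one_lt_card_iff_nontrivial.1 (hback ▸ h)).exists_lt
  simp only [crossings, S, T, coe_sdiff, Set.mem_sdiff, mem_coe, mem_filter, mem_univ, true_and,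
    not_le] at hj₁ hj₂ hk₁ hk₂
  have hjk : j₂ < k₁ := by rw [Fin.lt_def]; omega
  have hwjk : w k₁ < w j₂ := by rw [Fin.lt_def]; omega
  rcases lt_or_gt_of_ne (w.injective.ne hj.ne) with hwj | hwj
  · rcases lt_or_gt_of_ne (w.injective.ne hk.ne) with hwk | hwk
    · exact h3412 (containsPattern_3412 hj hjk hk hwj (by rw [Fin.lt_def]; omega) hwk)
    · exact h321 (containsPattern_321 hjk hk hwjk hwk)
  · exact h321 (containsPattern_321 hj hjk hwj hwjk)

/-- For `321`-avoiding `w` the lower bounds `#(crossings w i) ≤ l.count i` add up to the length of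
a word built from descents, so in a reduced word they are all equalities. -/
lemma count_eq_card_crossings_of_isReducedWord (h321 : ¬ ContainsPattern w [3, 2, 1])
    {l : List ℕ} (hl : IsReducedWord n w l) {i : ℕ} (hi : i < n) :
    l.count i = #(crossings w i) := by
  obtain ⟨l₀, hl₀, hlen₀⟩ := exists_isWord_length_le w
  have hle : ∀ i ∈ range n, #(crossings w i) ≤ l.count i :=
    fun i _ => card_crossings_le_count hl.1 i
  have hsum : ∑ i ∈ range n, l.count i = l.length := by
    simpa using Multiset.sum_count_eq_card (s := range n) (m := (l : Multiset ℕ))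
      fun a ha => mem_range.2 (Nat.lt_of_succ_lt (hl.1.1 a ha))
  have heq : ∑ i ∈ range n, #(crossings w i) = ∑ i ∈ range n, l.count i := by
    refine le_antisymm (sum_le_sum hle) ?_
    calc ∑ i ∈ range n, l.count i = l.length := hsum
      _ ≤ l₀.length := hl.2 l₀ hl₀
      _ ≤ #(inversions w) := hlen₀
      _ ≤ ∑ i ∈ range n, #(crossings w i) := card_inversions_le_sum_card_crossings h321
  exact ((sum_eq_sum_iff_of_le hle).1 heq i (mem_range.2 hi)).symm

end Avoidance

section NodupWords

def StabilizesPrefix (v : Perm (Fin n)) (k : ℕ) : Prop :=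
  ∀ j : Fin n, (v j : ℕ) ≤ k ↔ (j : ℕ) ≤ k

lemma stabilizesPrefix_prod {k : ℕ} {l : List ℕ} (hl : ∀ m ∈ l, m + 1 < n) (hk : k ∉ l) :
    StabilizesPrefix (l.map (adjTransposition n)).prod k := by
  induction l with
  | nil => simp [StabilizesPrefix]
  | cons m l ih =>
    intro j
    have hval := val_adjTransposition_apply (hl m List.mem_cons_self)
      ((l.map (adjTransposition n)).prod j)
    have hm : m ≠ k := fun h => hk (h ▸ List.mem_cons_self)
    have := ih (fun x hx => hl x (List.mem_cons_of_mem m hx))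
      (fun h => hk (List.mem_cons_of_mem m h)) j
    rw [List.map_cons, List.prod_cons, Perm.mul_apply]
    split_ifs at hval <;> omega

/-- If `v` stabilizes `{0, …, k}`, an occurrence of `P` in `s_k * v` that is not one in `v` uses
entries `p` before `q` whose values `k + 1`, `k` are adjacent, and the cut after position `k`
(`left z`) leaves every smaller value on its left and every larger value on its right. Patterns
without such a configuration cannot be created this way. -/
def NoCrossingSwap (P : List ℕ) : Prop :=
  ∀ (left : Fin P.length → Bool) (p q : Fin P.length),
    (∀ z z', z ≤ z' → left z' → left z) → left p → ¬ left q →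
    (∀ z, ¬ (P.get q < P.get z ∧ P.get z < P.get p)) →
    (∀ z, P.get z < P.get q → left z) → (∀ z, P.get p < P.get z → ¬ left z) → False

lemma noCrossingSwap_321 : NoCrossingSwap [3, 2, 1] := by
  unfold NoCrossingSwap
  decide

lemma noCrossingSwap_3412 : NoCrossingSwap [3, 4, 1, 2] := by
  unfold NoCrossingSwap
  decide

lemma not_containsPattern_adjTransposition_mul {P : List ℕ} (hP : NoCrossingSwap P) {k : ℕ}
    (hk : k + 1 < n) {v : Perm (Fin n)} (hv : StabilizesPrefix v k)
    (hvP : ¬ ContainsPattern v P) : ¬ ContainsPattern (adjTransposition n k * v) P := by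
  rintro ⟨f, hf, hfP⟩
  have hval := val_adjTransposition_apply hk
  by_cases hpq : ∃ p q, (v (f p) : ℕ) = k ∧ (v (f q) : ℕ) = k + 1
  · obtain ⟨p, q, hp, hq⟩ := hpq
    refine hP (fun z => decide ((f z : ℕ) ≤ k)) p q (fun z z' hzz' h => ?_) ?_ ?_ (fun z hz => ?_)
      (fun z hz => ?_) (fun z hz => ?_)
    · rw [decide_eq_true_eq] at h ⊢
      exact (Fin.le_def.1 (hf.monotone hzz')).trans h
    · exact decide_eq_true ((hv (f p)).1 hp.le)
    · rw [decide_eq_true_eq]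
      exact fun h => by have := (hv (f q)).2 h; omega
    · have h₁ := (hfP q z).2 hz.1
      have h₂ := (hfP z p).2 hz.2
      simp only [Fin.lt_def, Perm.mul_apply, hval, hp, hq] at h₁ h₂
      split_ifs at h₁ h₂ <;> omega
    · have h₁ := (hfP z q).2 hz
      simp only [Fin.lt_def, Perm.mul_apply, hval, hq] at h₁
      refine decide_eq_true ((hv (f z)).1 ?_)
      split_ifs at h₁ <;> omega
    · have h₁ := (hfP p z).2 hz
      simp only [Fin.lt_def, Perm.mul_apply, hval, hp] at h₁
      rw [decide_eq_true_eq]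
      intro h
      have := (hv (f z)).2 h
      split_ifs at h₁ <;> omega
  · refine hvP ⟨f, hf, fun a b => ?_⟩
    rw [← hfP a b, Perm.mul_apply, Perm.mul_apply, adjTransposition_lt_adjTransposition_iff hk]
    · exact fun h => hpq ⟨a, b, h⟩
    · exact fun h => hpq ⟨b, a, h.symm⟩

lemma not_containsPattern_one {P : List ℕ} {a b : Fin P.length} (hab : a < b)
    (hP : P.get b < P.get a) : ¬ ContainsPattern (1 : Perm (Fin n)) P := by
  rintro ⟨f, hf, hfP⟩
  exact (hf hab).not_gt ((hfP b a).2 hP)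

lemma not_containsPattern_prod_of_nodup {P : List ℕ} (hP : NoCrossingSwap P)
    (hP₁ : ¬ ContainsPattern (1 : Perm (Fin n)) P) {l : List ℕ} (hl : ∀ m ∈ l, m + 1 < n)
    (hnd : l.Nodup) : ¬ ContainsPattern (l.map (adjTransposition n)).prod P := by
  induction l with
  | nil => simpa using hP₁
  | cons m l ih =>
    obtain ⟨hm, hnd⟩ := List.nodup_cons.1 hnd
    have hl' : ∀ x ∈ l, x + 1 < n := fun x hx => hl x (List.mem_cons_of_mem m hx)
    rw [List.map_cons, List.prod_cons]
    exact not_containsPattern_adjTransposition_mul hP (hl m List.mem_cons_self)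
      (stabilizesPrefix_prod hl' hm) (ih hl' hnd)

end NodupWords

/-- `w` is boolean (every reduced word has pairwise distinct letters)
iff `w` avoids 321 and 3412. -/
theorem boolean_iff_avoids (n : ℕ) (w : Equiv.Perm (Fin n)) :
    (∀ l, IsReducedWord n w l → l.Nodup) ↔
      ¬ ContainsPattern w [3, 2, 1] ∧ ¬ ContainsPattern w [3, 4, 1, 2] := by
  constructor
  · intro hbool
    obtain ⟨l, hl⟩ := exists_isReducedWord w
    rw [hl.1.2]
    exact ⟨not_containsPattern_prod_of_nodup noCrossingSwap_321
        (not_containsPattern_one (a := 0) (b := 1) (by decide) (by decide)) hl.1.1 (hbool l hl),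
      not_containsPattern_prod_of_nodup noCrossingSwap_3412
        (not_containsPattern_one (a := 0) (b := 2) (by decide) (by decide)) hl.1.1 (hbool l hl)⟩
  · rintro ⟨h321, h3412⟩ l hl
    refine List.nodup_iff_count_le_one.2 fun i => ?_
    by_cases hi : i < n
    · rw [count_eq_card_crossings_of_isReducedWord h321 hl hi]
      exact card_crossings_le_one h321 h3412 i
    · rw [List.count_eq_zero_of_not_mem fun h => hi (Nat.lt_of_succ_lt (hl.1.1 i h))]
      exact zero_le_one
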